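/- arXiv:2103.01392 — 3 statements merged into one kernel-verified Lean document; each statement's English description precedes it below -/
import Mathlib

section
/- Let r > 0, let D = {z ∈ ℂ : |z| < r} and D* = {z ∈ ℂ : 0 < |z| < r}. Let h : ℂ → ℂ be holomorphic on D, let g : ℂ → ℂ be holomorphic on D* and nowhere vanishing on D*, and let a ∈ ℂ. Suppose that z · g′(z) = (a + z · h′(z)) · g(z) for all z ∈ D*, where g′ and h′ denote complex derivatives. Then a is an integer: there exists n ∈ ℤ with a = n. -/
/-!
Dividing `g` by `exp h` removes the holomorphic part of the logarithmic derivative: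
`G = g·exp(-h)` satisfies `z·G′ = a·G`. Along the circle `θ ↦ R e^{iθ}` this says that
`G(R e^{iθ})·e^{-iaθ}` has zero derivative, so comparing `θ = 0` with `θ = 2π` gives
`e^{-2πia} = 1`, i.e. `a ∈ ℤ`.
-/

open Complex Metric Real

theorem mul_deriv_mul_cexp_neg_eq {g h : ℂ → ℂ} {z a : ℂ}
    (hg : DifferentiableAt ℂ g z) (hh : DifferentiableAt ℂ h z)
    (hode : z * deriv g z = (a + z * deriv h z) * g z) :
    z * deriv (fun w => g w * cexp (-h w)) z = a * (g z * cexp (-h z)) := by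
  rw [(hg.hasDerivAt.fun_mul hh.hasDerivAt.fun_neg.cexp).deriv]
  linear_combination cexp (-h z) * hode

theorem exists_int_eq_of_mul_deriv_eq_on_sphere {G : ℂ → ℂ} {R : ℝ} {a : ℂ}
    (hG : ∀ z ∈ sphere (0 : ℂ) |R|, DifferentiableAt ℂ G z)
    (hGR : G R ≠ 0)
    (hode : ∀ z ∈ sphere (0 : ℂ) |R|, z * deriv G z = a * G z) :
    ∃ n : ℤ, a = n := by
  set F : ℝ → ℂ := fun θ => G (circleMap 0 R θ) * cexp (-(a * (θ * I)))
  have hF : ∀ θ, HasDerivAt F 0 θ := by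
    intro θ
    have hz := circleMap_mem_sphere' 0 R θ
    have hexp : HasDerivAt (fun θ : ℝ => -(a * ((θ : ℂ) * I))) (-(a * I)) θ := by
      simpa using ((hasDerivAt_id (θ : ℂ)).mul_const I).const_mul a |>.neg.comp_ofReal
    have hprod := ((hG _ hz).hasDerivAt.comp θ (hasDerivAt_circleMap 0 R θ)).mul hexp.cexp
    refine hprod.congr_deriv ?_
    rw [Function.comp_apply]
    linear_combination (I * cexp (-(a * (θ * I)))) * hode _ hz
  have hperiod : F (2 * π) = F 0 :=
    is_const_of_deriv_eq_zero (fun θ => (hF θ).differentiableAt) (fun θ => (hF θ).deriv) _ _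
  have hmonodromy : cexp (-(a * (2 * π * I))) = 1 := by
    have hR : circleMap 0 R 0 = R := by simp [circleMap_zero]
    simp only [F, (periodic_circleMap 0 R).eq, hR] at hperiod
    simpa using mul_left_cancel₀ hGR hperiod
  obtain ⟨n, hn⟩ := exp_eq_one_iff.mp hmonodromy
  have hn' : -a = n := mul_right_cancel₀ two_pi_I_ne_zero (by simpa using hn)
  exact ⟨-n, by push_cast; linear_combination -hn'⟩

/-- If `g` is holomorphic and nowhere vanishing on the punctured disk `D* = B(0,r) \ {0}`,
`h` is holomorphic on the disk `B(0,r)`, and `z·g′(z) = (a + z·h′(z))·g(z)` on `D*`,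
then the residue `a` is an integer. -/
theorem stmt_6 (r : ℝ) (hr : 0 < r) (h g : ℂ → ℂ) (a : ℂ)
    (hh : DifferentiableOn ℂ h (Metric.ball (0 : ℂ) r))
    (hg : DifferentiableOn ℂ g (Metric.ball (0 : ℂ) r \ {0}))
    (hg0 : ∀ z ∈ Metric.ball (0 : ℂ) r \ {0}, g z ≠ 0)
    (hode : ∀ z ∈ Metric.ball (0 : ℂ) r \ {0},
      z * deriv g z = (a + z * deriv h z) * g z) :
    ∃ n : ℤ, a = (n : ℂ) := by
  have hsphere : sphere (0 : ℂ) |r / 2| ⊆ ball 0 r \ {0} := by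
    intro z hz
    rw [mem_sphere_zero_iff_norm, abs_of_pos (half_pos hr)] at hz
    exact ⟨by simpa [hz] using half_lt_self hr, by rintro rfl; simp at hz; linarith⟩
  have hdiff : ∀ z ∈ sphere (0 : ℂ) |r / 2|, DifferentiableAt ℂ g z ∧ DifferentiableAt ℂ h z :=
    fun z hz =>
      ⟨hg.differentiableAt ((isOpen_ball.sdiff isClosed_singleton).mem_nhds (hsphere hz)),
        hh.differentiableAt (isOpen_ball.mem_nhds (hsphere hz).1)⟩
  refine exists_int_eq_of_mul_deriv_eq_on_sphere
    (G := fun w => g w * cexp (-h w)) (R := r / 2) ?_ ?_ ?_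
  · exact fun z hz => (hdiff z hz).1.mul (hdiff z hz).2.neg.cexp
  · exact mul_ne_zero (hg0 _ (hsphere (by simp [abs_div]))) (exp_ne_zero _)
  · exact fun z hz => mul_deriv_mul_cexp_neg_eq (hdiff z hz).1 (hdiff z hz).2 (hode z (hsphere hz))
end

section
/- Let r > 0, let D = {z ∈ ℂ : |z| < r} and D* = {z ∈ ℂ : 0 < |z| < r}. Let h : ℂ → ℂ be holomorphic on D, let g : ℂ → ℂ be holomorphic on D* and nowhere vanishing on D*, and let n ∈ ℤ. Suppose that z · g′(z) = (n + z · h′(z)) · g(z) for all z ∈ D*. Then there exists a nonzero constant c ∈ ℂ such that g(z) = c · zⁿ · exp(h(z)) for all z ∈ D*, where zⁿ denotes the integer power (zpow). -/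
/-!
Both `g` and `z ↦ zⁿ · exp (h z)` are nowhere vanishing on the punctured disk and, by the
differential equation, have the same logarithmic derivative `n / z + h′(z)` there. Since the
punctured disk is connected, two such functions differ by a nonzero multiplicative constant.
-/

open Metric Set

theorem isConnected_ball_diff_singleton {E : Type*} [NormedAddCommGroup E] [NormedSpace ℝ E]
    (hE : 1 < Module.rank ℝ E) (x : E) {r : ℝ} (hr : 0 < r) :
    IsConnected (ball x r \ {x}) := by
  have polar : (fun p : ℝ × E => x + p.1 • p.2) '' (Ioo 0 r ×ˢ sphere 0 1) = ball x r \ {x} := by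
    ext z
    constructor
    · rintro ⟨⟨t, u⟩, ⟨⟨ht, htr⟩, hu⟩, rfl⟩
      rw [mem_sphere_zero_iff_norm] at hu
      have hu0 : u ≠ 0 := norm_ne_zero_iff.mp (by rw [hu]; exact one_ne_zero)
      simp [norm_smul, hu, abs_of_pos ht, htr, ht.ne', hu0]
    · rintro ⟨hz, hzx⟩
      have hd : 0 < ‖z - x‖ := norm_pos_iff.mpr (sub_ne_zero.mpr hzx)
      refine ⟨(‖z - x‖, ‖z - x‖⁻¹ • (z - x)), ⟨⟨hd, mem_ball_iff_norm.mp hz⟩, ?_⟩, ?_⟩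
      · simp [norm_smul, hd.ne']
      · simp [smul_smul, hd.ne']
  rw [← polar]
  exact ((isConnected_Ioo hr).prod (isConnected_sphere hE 0 zero_le_one)).image _
    (by fun_prop)

theorem logDeriv_zpow_mul_cexp {h : ℂ → ℂ} {z : ℂ} (hz : z ≠ 0) (hh : DifferentiableAt ℂ h z)
    (n : ℤ) : logDeriv (fun w => w ^ n * Complex.exp (h w)) z = n / z + deriv h z := by
  rw [logDeriv_mul (f := (· ^ n)) (g := fun w => Complex.exp (h w)) z (zpow_ne_zero n hz)
    (Complex.exp_ne_zero _) (differentiableAt_zpow.mpr (.inl hz)) hh.cexp, logDeriv_zpow,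
    ← Function.comp_def Complex.exp h, logDeriv_comp Complex.differentiableAt_exp hh,
    Complex.logDeriv_exp, Pi.one_apply, one_mul]

/-- If `g` is holomorphic and nowhere vanishing on the punctured disk `D* = B(0,r) \ {0}`,
`h` is holomorphic on the disk `B(0,r)`, `n` is an integer, and
`z·g′(z) = (n + z·h′(z))·g(z)` on `D*`, then `g(z) = c·zⁿ·exp(h(z))` on `D*` for some
nonzero constant `c`. -/
theorem stmt_7 (r : ℝ) (hr : 0 < r) (h g : ℂ → ℂ) (n : ℤ)
    (hh : DifferentiableOn ℂ h (Metric.ball (0 : ℂ) r))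
    (hg : DifferentiableOn ℂ g (Metric.ball (0 : ℂ) r \ {0}))
    (hg0 : ∀ z ∈ Metric.ball (0 : ℂ) r \ {0}, g z ≠ 0)
    (hode : ∀ z ∈ Metric.ball (0 : ℂ) r \ {0},
      z * deriv g z = ((n : ℂ) + z * deriv h z) * g z) :
    ∃ c : ℂ, c ≠ 0 ∧ ∀ z ∈ Metric.ball (0 : ℂ) r \ {0},
      g z = c * z ^ n * Complex.exp (h z) := by
  set s := ball (0 : ℂ) r \ {0}
  have hs : IsOpen s := isOpen_ball.sdiff isClosed_singleton
  have hh' : ∀ z ∈ s, DifferentiableAt ℂ h z := fun z hz =>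
    hh.differentiableAt (isOpen_ball.mem_nhds hz.1)
  have hG : DifferentiableOn ℂ (fun w => w ^ n * Complex.exp (h w)) s := fun z hz =>
    ((differentiableAt_zpow.mpr (.inl hz.2)).mul (hh' z hz).cexp).differentiableWithinAt
  have hlog : EqOn (logDeriv g) (logDeriv fun w => w ^ n * Complex.exp (h w)) s := by
    intro z hz
    have hz0 : z ≠ 0 := hz.2
    rw [logDeriv_zpow_mul_cexp hz0 (hh' z hz), logDeriv_apply]
    field_simp [hg0 z hz]
    linear_combination hode z hz
  obtain ⟨c, hc, hgc⟩ := (logDeriv_eqOn_iff hg hG hs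
    (isConnected_ball_diff_singleton (by simp) 0 hr).isPreconnected
    (fun z hz => mul_ne_zero (zpow_ne_zero n hz.2) (Complex.exp_ne_zero _)) hg0).mp hlog
  exact ⟨c, hc, fun z hz => by simpa [mul_assoc] using hgc hz⟩
end

section
/- Let r > 0, let D = {z ∈ ℂ : |z| < r} and D* = {z ∈ ℂ : 0 < |z| < r}. Let h : ℂ → ℂ be holomorphic on D, let g : ℂ → ℂ be holomorphic on D* and nowhere vanishing on D*, and let a ∈ ℂ. Suppose that z · g′(z) = (a + z · h′(z)) · g(z) for all z ∈ D*. Then g extends holomorphically across 0 — i.e. there exists G : ℂ → ℂ holomorphic on D with G(z) = g(z) for all z ∈ D* — if and only if a is a nonnegative integer (there exists n ∈ ℕ with a = n). -/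
/-!
Away from `0` the equation says that `g` has logarithmic derivative `a / z + h′`. If `g` extends
to `G` holomorphic at `0`, write `G = z ^ n F` with `F 0 ≠ 0` (`G` is not identically zero); then
`z · G′ / G = n + z · F′ / F → n` as `z → 0`, while the equation gives `z · G′ / G → a`, so
`a = n`. Conversely, if `a = n`, then `g` and `z ^ n exp h` have the same logarithmic derivative
on the connected punctured disk, so `g = c z ^ n exp h` there, and the right side is holomorphic
on the whole disk.
-/

open Filter Metric Set Complex
open scoped Topology

theorem Complex.isPreconnected_ball_zero_diff_singleton (r : ℝ) :
    IsPreconnected (ball (0 : ℂ) r \ {0}) := by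
  have hpolar : ball (0 : ℂ) r \ {0} =
      (fun p : ℝ × ℝ ↦ (p.1 : ℂ) * exp (p.2 * I)) '' (Ioo 0 r ×ˢ univ) := by
    ext z
    constructor
    · rintro ⟨hz, hz0⟩
      exact ⟨(‖z‖, arg z), ⟨⟨norm_pos_iff.2 hz0, by simpa using hz⟩, trivial⟩,
        norm_mul_exp_arg_mul_I z⟩
    · rintro ⟨⟨t, θ⟩, ⟨⟨ht0, htr⟩, -⟩, rfl⟩
      simp [norm_exp_ofReal_mul_I, abs_of_pos ht0, ht0.ne', htr]
  rw [hpolar]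
  exact (isPreconnected_Ioo.prod isPreconnected_univ).image _ (by fun_prop)

theorem logDeriv_cexp_comp {h : ℂ → ℂ} {z : ℂ} (hz : DifferentiableAt ℂ h z) :
    logDeriv (fun w ↦ exp (h w)) z = deriv h z := by
  rw [logDeriv_apply, hz.hasDerivAt.cexp.deriv, mul_div_cancel_left₀ _ (exp_ne_zero _)]

section LogarithmicResidue

variable {𝕜 : Type*} [NontriviallyNormedField 𝕜] [CompleteSpace 𝕜] {f : 𝕜 → 𝕜} {x : 𝕜}

theorem AnalyticAt.tendsto_mul_logDeriv_nhdsNE (hf : AnalyticAt 𝕜 f x)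
    (hfin : analyticOrderAt f x ≠ ⊤) :
    Tendsto (fun w ↦ (w - x) * logDeriv f w) (𝓝[≠] x) (𝓝 (analyticOrderNatAt f x)) := by
  obtain ⟨F, hF, hFx, hfF⟩ := hf.analyticOrderAt_ne_top.mp hfin
  set n := analyticOrderNatAt f x
  have hsplit : ∀ᶠ w in 𝓝[≠] x, (w - x) * logDeriv f w = n + (w - x) * logDeriv F w := by
    filter_upwards [nhdsWithin_le_nhds hfF.eventuallyEq_nhds,
      nhdsWithin_le_nhds (hF.continuousAt.eventually_ne hFx),
      nhdsWithin_le_nhds hF.eventually_analyticAt, self_mem_nhdsWithin] with w hfw hFw hFw' hw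
    have hwx : w - x ≠ 0 := sub_ne_zero.2 hw
    rw [(logDeriv_congr_nhds hfw).eq_of_nhds]
    simp only [smul_eq_mul]
    rw [logDeriv_mul (f := fun z ↦ (z - x) ^ n) w (pow_ne_zero _ hwx) hFw (by fun_prop)
      hFw'.differentiableAt, logDeriv_fun_pow (by fun_prop), logDeriv_apply, deriv_sub_const,
      deriv_id'']
    field_simp
  have hlogF : ContinuousAt (logDeriv F) x := hF.deriv.continuousAt.div hF.continuousAt hFx
  have hlim : Tendsto (fun w ↦ (n : 𝕜) + (w - x) * logDeriv F w) (𝓝 x) (𝓝 n) := by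
    have hcont : ContinuousAt (fun w ↦ (n : 𝕜) + (w - x) * logDeriv F w) x := by fun_prop
    simpa using hcont.tendsto
  exact (hlim.mono_left nhdsWithin_le_nhds).congr' (hsplit.mono fun _ h ↦ h.symm)

theorem AnalyticAt.eq_analyticOrderNatAt_of_logDeriv_eq {φ : 𝕜 → 𝕜} {a : 𝕜}
    (hf : AnalyticAt 𝕜 f x) (hfin : analyticOrderAt f x ≠ ⊤) (hφ : ContinuousAt φ x)
    (hlog : ∀ᶠ w in 𝓝[≠] x, logDeriv f w = a / (w - x) + φ w) :
    a = analyticOrderNatAt f x := by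
  have hcont : ContinuousAt (fun w ↦ a + (w - x) * φ w) x := by fun_prop
  have hlim : Tendsto (fun w ↦ a + (w - x) * φ w) (𝓝[≠] x) (𝓝 a) := by
    simpa using hcont.tendsto.mono_left nhdsWithin_le_nhds
  refine tendsto_nhds_unique (hlim.congr' ?_) (hf.tendsto_mul_logDeriv_nhdsNE hfin)
  filter_upwards [hlog, self_mem_nhdsWithin] with w hw hwx
  rw [hw, mul_add, mul_div_cancel₀ _ (sub_ne_zero.2 hwx)]

end LogarithmicResidue

theorem exists_eqOn_const_mul_pow_mul_cexp {s : Set ℂ} {g h : ℂ → ℂ} {n : ℕ} (hs : IsOpen s)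
    (hsc : IsPreconnected s) (hs0 : (0 : ℂ) ∉ s) (hg : DifferentiableOn ℂ g s)
    (hh : DifferentiableOn ℂ h s) (hg0 : ∀ z ∈ s, g z ≠ 0)
    (hlog : EqOn (logDeriv g) (fun z ↦ n / z + deriv h z) s) :
    ∃ c : ℂ, EqOn g (fun z ↦ c * (z ^ n * exp (h z))) s := by
  have hne : ∀ z ∈ s, z ^ n * exp (h z) ≠ 0 := fun z hz ↦
    mul_ne_zero (pow_ne_zero _ (ne_of_mem_of_not_mem hz hs0)) (exp_ne_zero _)
  have hlog' : EqOn (logDeriv g) (logDeriv fun z ↦ z ^ n * exp (h z)) s := fun z hz ↦ by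
    rw [hlog hz, logDeriv_mul (f := (· ^ n)) (g := fun w ↦ exp (h w)) z
      (pow_ne_zero n (ne_of_mem_of_not_mem hz hs0)) (exp_ne_zero _) (by fun_prop)
      ((hh.differentiableAt (hs.mem_nhds hz)).cexp), logDeriv_pow,
      logDeriv_cexp_comp (hh.differentiableAt (hs.mem_nhds hz))]
  obtain ⟨c, -, hc⟩ :=
    (logDeriv_eqOn_iff hg ((differentiableOn_pow n).mul hh.cexp) hs hsc hne hg0).mp hlog'
  exact ⟨c, fun z hz ↦ hc hz⟩

/-- With `g` holomorphic and nowhere vanishing on the punctured disk `D* = B(0,r) \ {0}`,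
`h` holomorphic on `B(0,r)`, and `z·g′(z) = (a + z·h′(z))·g(z)` on `D*`: the function `g`
extends holomorphically across `0` if and only if `a` is a nonnegative integer. -/
theorem stmt_8 (r : ℝ) (hr : 0 < r) (h g : ℂ → ℂ) (a : ℂ)
    (hh : DifferentiableOn ℂ h (Metric.ball (0 : ℂ) r))
    (hg : DifferentiableOn ℂ g (Metric.ball (0 : ℂ) r \ {0}))
    (hg0 : ∀ z ∈ Metric.ball (0 : ℂ) r \ {0}, g z ≠ 0)
    (hode : ∀ z ∈ Metric.ball (0 : ℂ) r \ {0},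
      z * deriv g z = (a + z * deriv h z) * g z) :
    (∃ G : ℂ → ℂ, DifferentiableOn ℂ G (Metric.ball (0 : ℂ) r) ∧
      ∀ z ∈ Metric.ball (0 : ℂ) r \ {0}, G z = g z) ↔ ∃ n : ℕ, a = (n : ℂ) := by
  set s := ball (0 : ℂ) r \ {0}
  have hs : IsOpen s := isOpen_ball.sdiff isClosed_singleton
  have hlog : EqOn (logDeriv g) (fun z ↦ a / z + deriv h z) s := fun z hz ↦ by
    have hz0 : z ≠ 0 := hz.2
    rw [logDeriv_apply]
    field_simp [hg0 z hz]
    linear_combination hode z hz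
  constructor
  · rintro ⟨G, hG, hGg⟩
    have hsnhds : s ∈ 𝓝[≠] (0 : ℂ) := sdiff_mem_nhdsWithin_compl (ball_mem_nhds 0 hr) _
    have hfin : analyticOrderAt G 0 ≠ ⊤ := fun htop ↦ by
      obtain ⟨z, hGz, hz⟩ :=
        ((analyticOrderAt_eq_top.mp htop |>.filter_mono nhdsWithin_le_nhds).and hsnhds).exists
      exact hg0 z hz (hGg z hz ▸ hGz)
    have hh' : ContinuousAt (deriv h) 0 :=
      ((hh.analyticOnNhd isOpen_ball).deriv 0 (mem_ball_self hr)).continuousAt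
    refine ⟨_, (hG.analyticAt (ball_mem_nhds 0 hr)).eq_analyticOrderNatAt_of_logDeriv_eq
      hfin hh' ?_⟩
    filter_upwards [hsnhds] with z hz
    rw [(logDeriv_congr_nhds (eventually_of_mem (hs.mem_nhds hz) hGg)).eq_of_nhds, hlog hz,
      sub_zero]
  · rintro ⟨n, rfl⟩
    obtain ⟨c, hc⟩ := exists_eqOn_const_mul_pow_mul_cexp hs
      (isPreconnected_ball_zero_diff_singleton r) (fun h0 ↦ h0.2 rfl) hg (hh.mono sdiff_subset)
      hg0 hlog
    exact ⟨_, ((differentiableOn_pow n).mul hh.cexp).const_mul c, fun z hz ↦ (hc hz).symm⟩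
end
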